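/- arXiv:1904.00845 — 10 statements merged into one kernel-verified Lean document; each statement's English description precedes it below -/
import Mathlib

section
/- Let A be a Zinbiel algebra over ℂ (i.e., an algebra satisfying (xy)z = x(yz+zy)). Define a new product on A by [x,y] = xy - yx. Then (A, [-,-]) is a Tortkara algebra, i.e., it is anticommutative and satisfies [[a,b],[c,b]] = [J(a,b,c),b], where J(a,b,c) = [[a,b],c] + [[b,c],a] + [[c,a],b]. -/
/-- The Jacobian `J(a,b,c) = (ab)c + (bc)a + (ca)b` of a multiplication. -/
def Jac {A : Type*} [Add A] (mul : A → A → A) (a b c : A) : A :=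
  mul (mul a b) c + mul (mul b c) a + mul (mul c a) b

/-- A multiplication is Tortkara if it is anticommutative and satisfies
`(ab)(cb) = J(a,b,c)b`. -/
def IsTortkara {A : Type*} [AddCommGroup A] (mul : A → A → A) : Prop :=
  (∀ x y, mul x y = - mul y x) ∧
  ∀ a b c, mul (mul a b) (mul c b) = mul (Jac mul a b c) b

/-! The Zinbiel identity `(xy)z = x(yz + zy)` rewrites every product as a combination of
right-normed monomials, and both sides of the Tortkara identity reduce to the same one. -/

section

variable {R A : Type*} [CommSemiring R] [AddCommGroup A] [Module R A]

def IsZinbiel (m : A →ₗ[R] A →ₗ[R] A) : Prop :=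
  ∀ x y z, m (m x y) z = m x (m y z + m z y)

def commBracket (m : A →ₗ[R] A →ₗ[R] A) (x y : A) : A := m x y - m y x

theorem commBracket_anticomm (m : A →ₗ[R] A →ₗ[R] A) (x y : A) :
    commBracket m x y = -commBracket m y x :=
  (neg_sub _ _).symm

namespace IsZinbiel

variable {m : A →ₗ[R] A →ₗ[R] A}

theorem jac_commBracket (hZ : IsZinbiel m) (a b c : A) :
    Jac (commBracket m) a b c =
      m a (commBracket m c b) + m b (commBracket m a c) + m c (commBracket m b a) := by
  simp only [Jac, commBracket, map_add, map_sub, LinearMap.sub_apply, hZ _ _ _]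
  abel

theorem commBracket_commBracket_commBracket (hZ : IsZinbiel m) (a b c : A) :
    commBracket m (commBracket m a b) (commBracket m c b) =
      2 • (m a (m c (m b b)) - m a (m b (m b c)) + m b (m a (m b c)) - m b (m c (m b a)) +
        m c (m b (m b a)) - m c (m a (m b b))) := by
  simp only [commBracket, map_add, map_sub, LinearMap.sub_apply, hZ _ _ _]
  abel

theorem commBracket_jac_commBracket (hZ : IsZinbiel m) (a b c : A) :
    commBracket m (Jac (commBracket m) a b c) b =
      2 • (m a (m c (m b b)) - m a (m b (m b c)) + m b (m a (m b c)) - m b (m c (m b a)) +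
        m c (m b (m b a)) - m c (m a (m b b))) := by
  rw [hZ.jac_commBracket]
  simp only [commBracket, map_add, map_sub, LinearMap.add_apply, LinearMap.sub_apply, hZ _ _ _]
  abel

theorem isTortkara_commBracket (hZ : IsZinbiel m) : IsTortkara (commBracket m) :=
  ⟨commBracket_anticomm m, fun a b c => by
    rw [hZ.commBracket_commBracket_commBracket, hZ.commBracket_jac_commBracket]⟩

end IsZinbiel

end

/-- If `A` is a Zinbiel algebra over `ℂ`, then the commutator bracket
`[x,y] = xy - yx` makes `A` a Tortkara algebra. -/
theorem zinbiel_commutator_isTortkara {A : Type*} [AddCommGroup A] [Module ℂ A]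
    (m : A →ₗ[ℂ] A →ₗ[ℂ] A)
    (hZ : ∀ x y z : A, m (m x y) z = m x (m y z + m z y)) :
    IsTortkara (fun x y : A => m x y - m y x) :=
  IsZinbiel.isTortkara_commBracket hZ
end

section
/- Every dual Mock-Lie algebra, i.e., an algebra that is both anticommutative (xy = -yx) and antiassociative ((xy)z = -x(yz)), is a Tortkara algebra, i.e., satisfies (ab)(cb) = J(a,b,c)b where J(a,b,c) = (ab)c + (bc)a + (ca)b. -/
/-- Every dual Mock-Lie algebra (anticommutative and antiassociative)
is a Tortkara algebra. -/
theorem dual_mock_lie_isTortkara {A : Type*} [AddCommGroup A] [Module ℂ A]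
    (m : A →ₗ[ℂ] A →ₗ[ℂ] A)
    (hanti : ∀ x y : A, m x y = - m y x)
    (hantiassoc : ∀ x y z : A, m (m x y) z = - m x (m y z)) :
    IsTortkara (fun x y : A => m x y) := by
  refine ⟨fun x y => hanti x y, fun a b c => ?_⟩
  have hbb : m b b = 0 := by
    have h := hanti b b
    have h2 : (2 : ℂ) • m b b = 0 := by
      rw [two_smul]
      rw [eq_neg_iff_add_eq_zero] at h
      exact h
    exact (smul_eq_zero.mp h2).resolve_left (by norm_num)
  have hbbc : m b (m b c) = 0 := by
    have h := hantiassoc b b c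
    rw [hbb] at h
    simp only [map_zero, LinearMap.zero_apply] at h
    rw [eq_comm, neg_eq_zero] at h
    exact h
  have L : m (m a b) (m c b) = 0 := by
    rw [hanti c b, map_neg, hantiassoc, hbbc, map_zero, neg_neg]
  have R1 : m (m (m a b) c) b = 0 := by
    rw [hantiassoc, L, neg_zero]
  have R2 : m (m (m b c) a) b = 0 := by
    have : m (m b c) (m a b) = 0 := by
      rw [hanti (m b c) (m a b), hantiassoc, hbbc, map_zero, neg_neg]
    rw [hantiassoc, this, neg_zero]
  have R3 : m (m (m c a) b) b = 0 := by
    rw [hantiassoc, hbb, map_zero, neg_zero]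
  simp only [Jac]
  simp only [map_add, LinearMap.add_apply, R1, R2, R3, L, add_zero]
end

section
/- Let A be a Tortkara algebra over ℂ, V a vector space, and θ : A × A → V a skew-symmetric bilinear map. Define on A ⊕ V the product [x+x', y+y'] = xy + θ(x,y) for x,y ∈ A and x',y' ∈ V. Then A ⊕ V with this product is a Tortkara algebra if and only if θ satisfies the cocycle identity θ(xy,zt) + θ(xt,zy) = θ(J(x,y,z),t) + θ(J(x,t,z),y) for all x,y,z,t ∈ A. -/
/-- For a Tortkara algebra `A` over `ℂ` and a skew-symmetric bilinear map
`θ : A × A → V`, the central extension `A ⊕ V` with product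
`[x+x', y+y'] = xy + θ(x,y)` is a Tortkara algebra iff `θ` satisfies the
cocycle identity. -/
theorem centralExtension_isTortkara_iff {A V : Type*} [AddCommGroup A] [Module ℂ A]
    [AddCommGroup V] [Module ℂ V]
    (m : A →ₗ[ℂ] A →ₗ[ℂ] A) (hT : IsTortkara (fun x y : A => m x y))
    (θ : A →ₗ[ℂ] A →ₗ[ℂ] V) (hskew : ∀ x y : A, θ x y = - θ y x) :
    IsTortkara (fun p q : A × V => ((m p.1 q.1, θ p.1 q.1) : A × V)) ↔
      ∀ x y z t : A,
        θ (m x y) (m z t) + θ (m x t) (m z y)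
          = θ (Jac (fun a b => m a b) x y z) t + θ (Jac (fun a b => m a b) x t z) y := by
  constructor
  · intro h x y z t
    -- extract the 3-variable identity on the V component
    have H : ∀ a b c : A, θ (m (m a b) (m c b)) = θ (m (Jac (fun a b => m a b) a b c) b) ∧
        θ (m a b) (m c b) = θ (Jac (fun a b => m a b) a b c) b := by
      intro a b c
      have h2 := h.2 ((a, 0) : A × V) ((b, 0) : A × V) ((c, 0) : A × V)
      simp only [Jac, Prod.mk_add_mk, Prod.mk.injEq] at h2
      constructor
      · exact congrArg θ h2.1
      · exact h2.2
    have e1 := (H x (y + t) z).2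
    have e2 := (H x y z).2
    have e3 := (H x t z).2
    have key : θ (m x y) (m z t) + θ (m x t) (m z y)
        = θ (m x (y + t)) (m z (y + t)) - θ (m x y) (m z y) - θ (m x t) (m z t) := by
      simp only [map_add, LinearMap.add_apply]
      abel
    rw [key, e1, e2, e3]
    simp only [Jac, map_add, LinearMap.add_apply]
    abel
  · intro hθ
    constructor
    · intro p q
      have := hT.1 p.1 q.1
      simp only [Prod.neg_mk, Prod.mk.injEq]
      exact ⟨this, hskew p.1 q.1⟩
    · intro a b c
      have h1 : m (m a.1 b.1) (m c.1 b.1) = m (Jac (fun x y => m x y) a.1 b.1 c.1) b.1 :=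
        hT.2 a.1 b.1 c.1
      have h2 : θ (m a.1 b.1) (m c.1 b.1) = θ (Jac (fun x y => m x y) a.1 b.1 c.1) b.1 := by
        have hc := hθ a.1 b.1 c.1 b.1
        have h2smul : (2 : ℂ) • θ (m a.1 b.1) (m c.1 b.1)
            = (2 : ℂ) • θ (Jac (fun x y => m x y) a.1 b.1 c.1) b.1 := by
          rw [two_smul, two_smul]
          exact hc
        have := congrArg (fun v => (2 : ℂ)⁻¹ • v) h2smul
        simpa [smul_smul] using this
      simp only [Jac, Prod.mk_add_mk, Prod.mk.injEq]
      exact ⟨h1, h2⟩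
end

section
/- Let A be a Tortkara algebra with Ann(A) ≠ 0, A' a linear complement of Ann(A) in A with the induced Tortkara product [x,y]' = P(xy) (P the projection onto A'), and define θ : A' × A' → Ann(A) by θ(x,y) = xy - [x,y]'. Then θ is a Tortkara 2-cocycle on A' with values in Ann(A), Ann(A') ∩ Ann(θ) = 0, and the central extension A'_θ is isomorphic to A. -/
/-- A Tortkara 2-cocycle. -/
def IsTortkaraCocycle {A V : Type*} [AddCommGroup A] [AddCommGroup V]
    (mul : A → A → A) (θ : A → A → V) : Prop :=
  (∀ x y, θ x y = - θ y x) ∧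
  ∀ x y z t, θ (mul x y) (mul z t) + θ (mul x t) (mul z y)
      = θ (Jac mul x y z) t + θ (Jac mul x t z) y

/-- The annihilator `Ann(A) = {x : xA = 0}` as a submodule. -/
def annSub {A : Type*} [AddCommGroup A] [Module ℂ A]
    (m : A →ₗ[ℂ] A →ₗ[ℂ] A) : Submodule ℂ A where
  carrier := {x | ∀ y, m x y = 0}
  zero_mem' := by intro y; simp
  add_mem' := by intro a b ha hb y; simp [ha y, hb y]
  smul_mem' := by intro c a ha y; simp [ha y]

/-- Let `A` be a Tortkara algebra with `Ann(A) ≠ 0`, `A'` a complement of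
`Ann(A)` with product `[x,y]' = P(xy)`, and `θ(x,y) = xy - [x,y]'` with values in
`Ann(A)`. Then `θ` is a Tortkara 2-cocycle on `A'`, `Ann(A') ∩ Ann(θ) = 0`, and
the central extension `A'_θ` is isomorphic to `A`. -/
theorem centralExtension_recovers {A : Type*} [AddCommGroup A] [Module ℂ A]
    [FiniteDimensional ℂ A]
    (m : A →ₗ[ℂ] A →ₗ[ℂ] A) (hT : IsTortkara (fun x y : A => m x y))
    (hAnn : annSub m ≠ ⊥)
    (A' : Submodule ℂ A) (hc : IsCompl (annSub m) A')
    (P : A →ₗ[ℂ] A') (hP : P = Submodule.linearProjOfIsCompl A' (annSub m) hc.symm) :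
    (∀ x y : A', m (x : A) (y : A) - (P (m (x : A) (y : A)) : A) ∈ annSub m) ∧
    ∀ θ' : A' → A' → annSub m,
      (∀ x y : A', (θ' x y : A) = m (x : A) (y : A) - (P (m (x : A) (y : A)) : A)) →
      IsTortkaraCocycle (fun x y : A' => P (m (x : A) (y : A))) θ' ∧
      (∀ x : A', (∀ y : A', P (m (x : A) (y : A)) = 0) → (∀ y : A', θ' x y = 0) → x = 0) ∧
      ∃ e : (A' × annSub m) ≃ₗ[ℂ] A, ∀ p q : A' × annSub m,
        e (P (m (p.1 : A) (q.1 : A)), θ' p.1 q.1) = m (e p) (e q) := by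
  obtain ⟨hsk, htor⟩ := hT
  have hskew : ∀ a b : A, m a b = - m b a := hsk
  have hPid : ∀ x : A', P (x : A) = x := by
    intro x; rw [hP]; exact Submodule.linearProjOfIsCompl_apply_left hc.symm x
  have hsub : ∀ a : A, a - (P a : A) ∈ annSub m := by
    intro a
    have h0 : P (a - (P a : A)) = 0 := by rw [map_sub, hPid (P a), sub_self]
    nth_rewrite 1 [hP] at h0
    exact (Submodule.linearProjOfIsCompl_apply_eq_zero_iff hc.symm).mp h0
  have hml : ∀ a b : A, m ((P a : A)) b = m a b := by
    intro a b
    have h0 : m (a - (P a : A)) b = 0 := hsub a b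
    rw [map_sub, LinearMap.sub_apply, sub_eq_zero] at h0
    exact h0.symm
  have hmr : ∀ a b : A, m a ((P b : A)) = m a b := by
    intro a b
    rw [hskew a, hml, ← hskew]
  have hlin : ∀ a y c t : A,
      m (m a y) (m c t) + m (m a t) (m c y)
        = m (Jac (fun u v : A => m u v) a y c) t
          + m (Jac (fun u v : A => m u v) a t c) y := by
    intro a y c t
    have h1 := htor a (y + t) c
    have h2 := htor a y c
    have h3 := htor a t c
    simp only [Jac, map_add, LinearMap.add_apply] at h1 h2 h3 ⊢
    linear_combination (norm := abel) h1 - h2 - h3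
  refine ⟨fun x y => hsub _, ?_⟩
  intro θ' hθ'
  have hJac : ∀ x y z : A',
      ((Jac (fun a b : A' => P (m (a : A) (b : A))) x y z : A') : A)
        = (P (Jac (fun a b : A => m a b) (x : A) (y : A) (z : A)) : A) := by
    intro x y z
    simp only [Jac, Submodule.coe_add, map_add, hml]
  refine ⟨⟨?_, ?_⟩, ?_, ?_⟩
  · intro x y
    apply Subtype.ext
    have := hskew (x : A) (y : A)
    simp only [hθ', Submodule.coe_neg, this, map_neg]
    abel
  · intro x y z t
    apply Subtype.ext
    have key := hlin (x : A) (y : A) (z : A) (t : A)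
    have key2 := congrArg (fun a => ((P a : A') : A)) key
    simp only [map_add, Submodule.coe_add] at key2
    simp only [Submodule.coe_add, hθ', hJac, hml, hmr]
    rw [sub_add_sub_comm, sub_add_sub_comm, key, key2]
  · intro x hx1 hx2
    have h1 : ∀ y : A', m (x : A) (y : A) = 0 := by
      intro y
      have h := hθ' x y
      rw [hx2 y, hx1 y] at h
      simpa using h.symm
    have hxann : (x : A) ∈ annSub m := by
      show ∀ b, m (x : A) b = 0
      intro b
      have hb : b = (b - (P b : A)) + (P b : A) := by abel
      rw [hb, map_add]
      have hn : m (x : A) (b - (P b : A)) = 0 := by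
        rw [hskew]
        rw [hsub b (x : A), neg_zero]
      rw [hn, zero_add, h1 (P b)]
    have hmem : (x : A) ∈ (annSub m) ⊓ A' := ⟨hxann, x.2⟩
    rw [hc.inf_eq_bot] at hmem
    exact Subtype.ext (by simpa using hmem)
  · refine ⟨Submodule.prodEquivOfIsCompl A' (annSub m) hc.symm, ?_⟩
    intro p q
    rw [Submodule.coe_prodEquivOfIsCompl', Submodule.coe_prodEquivOfIsCompl',
      Submodule.coe_prodEquivOfIsCompl']
    have h2 : ∀ a, m ((p.2 : A)) a = 0 := p.2.2
    have h3 : ∀ a, m a ((q.2 : A)) = 0 := fun a => by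
      rw [hskew]; rw [q.2.2 a, neg_zero]
    simp only [map_add, LinearMap.add_apply, h2, h3, add_zero, zero_add, hθ']
    abel
end

section
/- Let T be the 6-dimensional algebra over ℂ with basis e1,...,e6 and anticommutative multiplication determined by e1e2 = e3, e1e3 = e4, e1e5 = e6, e2e4 = e5, e3e4 = e6 (all other products of basis elements zero). Then T is a Tortkara algebra, T is nilpotent, and T is not metabelian, i.e., there exist x,y,z,t ∈ T with (xy)(zt) ≠ 0. -/
/-- `IsProdOfLen mul n a` : `a` is a product (in some arrangement) of `n` elements. -/
inductive IsProdOfLen {A : Type*} (mul : A → A → A) : ℕ → A → Prop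
  | single (a : A) : IsProdOfLen mul 1 a
  | mul {m n : ℕ} {a b : A} : IsProdOfLen mul m a → IsProdOfLen mul n b →
      IsProdOfLen mul (m + n) (mul a b)

/-- An algebra is nilpotent if all sufficiently long products vanish. -/
def IsNilpotentAlg {A : Type*} [Zero A] (mul : A → A → A) : Prop :=
  ∃ N : ℕ, ∀ (n : ℕ) (x : A), N ≤ n → IsProdOfLen mul n x → x = 0

/-- The 6-dimensional algebra `T⁶₁₉` with `e₁e₂=e₃, e₁e₃=e₄, e₁e₅=e₆,
e₂e₄=e₅, e₃e₄=e₆` (anticommutative, other products zero). -/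
def mulT619 (x y : Fin 6 → ℂ) : Fin 6 → ℂ :=
  ![0, 0, x 0 * y 1 - x 1 * y 0, x 0 * y 2 - x 2 * y 0,
    x 1 * y 3 - x 3 * y 1, (x 0 * y 4 - x 4 * y 0) + (x 2 * y 3 - x 3 * y 2)]

lemma cons5 {α : Type*} (a b c d e f : α) : (![a,b,c,d,e,f] : Fin 6 → α) 5 = f := rfl

lemma prodLen_pos {n : ℕ} {x : Fin 6 → ℂ} (h : IsProdOfLen mulT619 n x) : 1 ≤ n := by
  induction h with
  | single => exact le_refl 1
  | mul _ _ ih1 ih2 => omega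

lemma prod_deg {n : ℕ} {x : Fin 6 → ℂ} (h : IsProdOfLen mulT619 n x) :
    (2 ≤ n → x 0 = 0 ∧ x 1 = 0) ∧ (3 ≤ n → x 2 = 0) ∧ (4 ≤ n → x 3 = 0) ∧
    (5 ≤ n → x 4 = 0) ∧ (6 ≤ n → x 5 = 0) := by
  induction h with
  | single a => exact ⟨fun h => absurd h (by omega), fun h => absurd h (by omega),
      fun h => absurd h (by omega), fun h => absurd h (by omega), fun h => absurd h (by omega)⟩
  | @mul m n a b ha hb iha ihb =>
    have hm := prodLen_pos ha
    have hn := prodLen_pos hb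
    obtain ⟨ia01, ia2, ia3, ia4, ia5⟩ := iha
    obtain ⟨ib01, ib2, ib3, ib4, ib5⟩ := ihb
    refine ⟨fun _ => ⟨rfl, rfl⟩, fun h => ?_, fun h => ?_, fun h => ?_, fun h => ?_⟩
    · show a 0 * b 1 - a 1 * b 0 = 0
      rcases Nat.lt_or_ge m 2 with h1 | h1
      · obtain ⟨e0, e1⟩ := ib01 (by omega); rw [e0, e1]; ring
      · obtain ⟨e0, e1⟩ := ia01 h1; rw [e0, e1]; ring
    · show a 0 * b 2 - a 2 * b 0 = 0
      have t1 : a 0 * b 2 = 0 := by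
        rcases Nat.lt_or_ge m 2 with h1 | h1
        · rw [ib2 (by omega)]; ring
        · rw [(ia01 h1).1]; ring
      have t2 : a 2 * b 0 = 0 := by
        rcases Nat.lt_or_ge n 2 with h1 | h1
        · rw [ia2 (by omega)]; ring
        · rw [(ib01 h1).1]; ring
      rw [t1, t2]; ring
    · show a 1 * b 3 - a 3 * b 1 = 0
      have t1 : a 1 * b 3 = 0 := by
        rcases Nat.lt_or_ge m 2 with h1 | h1
        · rw [ib3 (by omega)]; ring
        · rw [(ia01 h1).2]; ring
      have t2 : a 3 * b 1 = 0 := by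
        rcases Nat.lt_or_ge n 2 with h1 | h1
        · rw [ia3 (by omega)]; ring
        · rw [(ib01 h1).2]; ring
      rw [t1, t2]; ring
    · show (a 0 * b 4 - a 4 * b 0) + (a 2 * b 3 - a 3 * b 2) = 0
      have t1 : a 0 * b 4 = 0 := by
        rcases Nat.lt_or_ge m 2 with h1 | h1
        · rw [ib4 (by omega)]; ring
        · rw [(ia01 h1).1]; ring
      have t2 : a 4 * b 0 = 0 := by
        rcases Nat.lt_or_ge n 2 with h1 | h1
        · rw [ia4 (by omega)]; ring
        · rw [(ib01 h1).1]; ring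
      have t3 : a 2 * b 3 = 0 := by
        rcases Nat.lt_or_ge m 3 with h1 | h1
        · rw [ib3 (by omega)]; ring
        · rw [ia2 h1]; ring
      have t4 : a 3 * b 2 = 0 := by
        rcases Nat.lt_or_ge n 3 with h1 | h1
        · rw [ia3 (by omega)]; ring
        · rw [ib2 h1]; ring
      rw [t1, t2, t3, t4]; ring

/-- `T⁶₁₉` is a nilpotent Tortkara algebra which is not metabelian. -/
theorem T619_tortkara_nilpotent_not_metabelian :
    IsTortkara mulT619 ∧ IsNilpotentAlg mulT619 ∧
    ∃ x y z t : Fin 6 → ℂ, mulT619 (mulT619 x y) (mulT619 z t) ≠ 0 := by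
  refine ⟨⟨?_, ?_⟩, ?_, ?_⟩
  · intro x y; funext i; fin_cases i <;> simp [mulT619, cons5] <;> ring
  · intro a b c; funext i; fin_cases i <;> simp [mulT619, Jac, cons5] <;> (try ring) <;> tauto
  · refine ⟨6, fun n x hn h => funext fun i => ?_⟩
    obtain ⟨h01, h2, h3, h4, h5⟩ := prod_deg h
    fin_cases i
    · exact (h01 (by omega)).1
    · exact (h01 (by omega)).2
    · exact h2 (by omega)
    · exact h3 (by omega)
    · exact h4 (by omega)
    · exact h5 (by omega)
  · refine ⟨![1,0,0,0,0,0], ![0,1,0,0,0,0], ![1,0,0,0,0,0], ![0,0,1,0,0,0], fun h => ?_⟩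
    have h1 : mulT619 ![1,0,0,0,0,0] ![0,1,0,0,0,0] = ![0,0,1,0,0,0] := by
      funext i; fin_cases i <;> simp [mulT619, cons5]
    have h2 : mulT619 ![1,0,0,0,0,0] ![0,0,1,0,0,0] = ![0,0,0,1,0,0] := by
      funext i; fin_cases i <;> simp [mulT619, cons5]
    have h3 : mulT619 ![0,0,1,0,0,0] ![0,0,0,1,0,0] = ![0,0,0,0,0,(1:ℂ)] := by
      funext i; fin_cases i <;> simp [mulT619, cons5]
    rw [h1, h2, h3] at h
    have h5 := congrFun h 5
    rw [cons5] at h5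
    exact one_ne_zero (h5.trans rfl)
end

section
/- Let T be the 5-dimensional algebra over ℂ with basis e1,...,e5 and anticommutative multiplication determined by e1e2 = e3, e1e3 = e4, e2e4 = e5 (all other products of basis elements zero). Then T is a nilpotent Tortkara algebra but is not a Malcev algebra, i.e., the Malcev identity (wy)(xz) = ((wx)y)z + ((xy)z)w + ((yz)w)x + ((zw)x)y fails for some w,x,y,z ∈ T. -/
/-- The 5-dimensional algebra `T⁵₁₀` with `e₁e₂=e₃, e₁e₃=e₄, e₂e₄=e₅`
(anticommutative, other products zero). -/
def mulT510 (x y : Fin 5 → ℂ) : Fin 5 → ℂ :=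
  ![0, 0, x 0 * y 1 - x 1 * y 0, x 0 * y 2 - x 2 * y 0, x 1 * y 3 - x 3 * y 1]

lemma mulT510_apply (x y : Fin 5 → ℂ) (i : Fin 5) :
    mulT510 x y i =
      ![0, 0, x 0 * y 1 - x 1 * y 0, x 0 * y 2 - x 2 * y 0, x 1 * y 3 - x 3 * y 1] i := rfl

lemma m0 (x y : Fin 5 → ℂ) : mulT510 x y 0 = 0 := rfl
lemma m1 (x y : Fin 5 → ℂ) : mulT510 x y 1 = 0 := rfl
lemma m2 (x y : Fin 5 → ℂ) : mulT510 x y 2 = x 0 * y 1 - x 1 * y 0 := rfl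
lemma m3 (x y : Fin 5 → ℂ) : mulT510 x y 3 = x 0 * y 2 - x 2 * y 0 := rfl
lemma m4 (x y : Fin 5 → ℂ) : mulT510 x y 4 = x 1 * y 3 - x 3 * y 1 := rfl

lemma prod_invariants : ∀ (n : ℕ) (a : Fin 5 → ℂ), IsProdOfLen mulT510 n a →
    (2 ≤ n → a 0 = 0 ∧ a 1 = 0) ∧ (3 ≤ n → a 2 = 0) ∧ (4 ≤ n → a 3 = 0) ∧ (5 ≤ n → a = 0) := by
  intro n a h
  induction h with
  | single a => exact ⟨fun h => by omega, fun h => by omega, fun h => by omega, fun h => by omega⟩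
  | @mul m n a b _ _ iha ihb =>
    have hm : 1 ≤ m := by
      rename_i h1 _; clear iha ihb; induction h1 with
      | single => exact le_refl 1
      | mul _ _ ih _ => omega
    have hn : 1 ≤ n := by
      rename_i h2; clear iha ihb; induction h2 with
      | single => exact le_refl 1
      | mul _ _ ih _ => omega
    refine ⟨fun _ => ⟨rfl, rfl⟩, ?_, ?_, ?_⟩
    · intro h
      -- m+n ≥ 3, so one of m,n ≥ 2
      show a 0 * b 1 - a 1 * b 0 = 0
      rcases Nat.lt_or_ge m 2 with hm2 | hm2
      · have hn2 : 2 ≤ n := by omega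
        obtain ⟨h0, h1⟩ := (ihb.1 hn2)
        rw [h0, h1]; ring
      · obtain ⟨h0, h1⟩ := (iha.1 hm2)
        rw [h0, h1]; ring
    · intro h
      show a 0 * b 2 - a 2 * b 0 = 0
      rcases Nat.lt_or_ge m 2 with hm2 | hm2
      · have hn3 : 3 ≤ n := by omega
        rw [(ihb.1 (by omega)).1, (ihb.2.1 hn3)]; ring
      · rcases Nat.lt_or_ge n 2 with hn2 | hn2
        · have hm3 : 3 ≤ m := by omega
          rw [(iha.1 (by omega)).1, (iha.2.1 hm3)]; ring
        · rw [(iha.1 hm2).1, (ihb.1 hn2).1]; ring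
    · intro h
      -- m+n ≥ 5
      funext i
      have key : ∀ j : Fin 5, mulT510 a b j = 0 := by
        intro j
        rcases Nat.lt_or_ge m 2 with hm2 | hm2
        · -- m = 1, n ≥ 4
          have := ihb.1 (by omega)
          have h2 := ihb.2.1 (by omega)
          have h3 := ihb.2.2.1 (by omega)
          fin_cases j <;> simp [mulT510_apply, this.1, this.2, h2, h3] <;> ring
        · rcases Nat.lt_or_ge n 2 with hn2 | hn2
          · have := iha.1 (by omega)
            have h2 := iha.2.1 (by omega)
            have h3 := iha.2.2.1 (by omega)
            fin_cases j <;> simp [mulT510_apply, this.1, this.2, h2, h3] <;> ring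
          · -- m ≥ 2, n ≥ 2, m+n ≥ 5 so one ≥ 3
            have ha01 := iha.1 hm2
            have hb01 := ihb.1 hn2
            rcases Nat.lt_or_ge m 3 with hm3 | hm3
            · have hb2 := ihb.2.1 (by omega)
              fin_cases j <;>
                simp [mulT510_apply, ha01.1, ha01.2, hb01.1, hb01.2, hb2] <;> ring
            · have ha2 := iha.2.1 hm3
              fin_cases j <;>
                simp [mulT510_apply, ha01.1, ha01.2, hb01.1, hb01.2, ha2] <;> ring
      exact key i

/-- `T⁵₁₀` is a nilpotent Tortkara algebra which is not a Malcev algebra. -/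
theorem T510_tortkara_nilpotent_not_malcev :
    IsTortkara mulT510 ∧ IsNilpotentAlg mulT510 ∧
    ∃ w x y z : Fin 5 → ℂ,
      mulT510 (mulT510 w y) (mulT510 x z) ≠
        mulT510 (mulT510 (mulT510 w x) y) z + mulT510 (mulT510 (mulT510 x y) z) w +
          mulT510 (mulT510 (mulT510 y z) w) x + mulT510 (mulT510 (mulT510 z w) x) y := by
  have mself : ∀ a : Fin 5 → ℂ, mulT510 a a = 0 := by
    intro a; funext i; fin_cases i <;> simp [mulT510, -mul_eq_zero] <;> ring
  have mz : ∀ y : Fin 5 → ℂ, mulT510 0 y = 0 := by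
    intro y; funext i; fin_cases i <;> simp [mulT510]
  refine ⟨⟨?_, ?_⟩, ?_, ?_⟩
  · intro x y
    funext i
    fin_cases i <;> simp [mulT510, -mul_eq_zero] <;> ring
  · intro a b c
    unfold Jac
    funext i
    fin_cases i <;> simp [mulT510, -mul_eq_zero] <;> ring
  · exact ⟨5, fun n x hn h => (prod_invariants n x h).2.2.2 hn⟩
  · refine ⟨![1,0,0,0,0], ![1,0,0,0,0], ![0,1,0,0,0], ![0,1,0,0,0], fun h => ?_⟩
    have l12 : mulT510 ![1,0,0,0,0] ![0,1,0,0,0] = ![0,0,1,0,0] := by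
      funext i; fin_cases i <;> simp [mulT510]
    have l32 : mulT510 ![0,0,1,0,0] ![0,1,0,0,0] = 0 := by
      funext i; fin_cases i <;> simp [mulT510]
    have l21 : mulT510 ![0,1,0,0,0] ![1,0,0,0,0] = ![0,0,-1,0,0] := by
      funext i; fin_cases i <;> simp [mulT510]
    have lN1 : mulT510 ![0,0,-1,0,0] ![1,0,0,0,0] = ![0,0,0,1,0] := by
      funext i; fin_cases i <;> simp [mulT510]
    have l42 : mulT510 ![0,0,0,1,0] ![0,1,0,0,0] = ![0,0,0,0,-1] := by
      funext i; fin_cases i <;> simp [mulT510]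
    simp only [l12, l32, l21, lN1, l42, mself, mz] at h
    have := congrFun h 4
    simp at this
end

section
/- Let T be the 4-dimensional algebra over ℂ with basis e1,e2,e3,e4 and anticommutative multiplication determined by e1e2 = e3, e1e3 = e4 (all other products of basis elements zero). Then every algebra automorphism of T has matrix (in the basis e1,e2,e3,e4) of the form [[x,0,0,0],[z,y,0,0],[u,v,xy,0],[h,g,xv,x²y]] with x,y ≠ 0, and conversely every such invertible matrix defines an automorphism of T. -/
/-- The 4-dimensional algebra `T⁴₀₂` with `e₁e₂=e₃, e₁e₃=e₄`
(anticommutative, other products zero). -/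
def mulT402 (x y : Fin 4 → ℂ) : Fin 4 → ℂ :=
  ![0, 0, x 0 * y 1 - x 1 * y 0, x 0 * y 2 - x 2 * y 0]

private lemma decomp4 (w : Fin 4 → ℂ) :
    w = w 0 • ![1,0,0,0] + w 1 • ![0,1,0,0] + w 2 • ![0,0,1,0] + w 3 • ![0,0,0,1] := by
  funext i; fin_cases i <;> simp

/-- The automorphisms of `T⁴₀₂` are exactly the invertible linear maps with
matrix `[[x,0,0,0],[z,y,0,0],[u,v,xy,0],[h,g,xv,x²y]]` in the basis `e₁,…,e₄`. -/
theorem T402_automorphisms (φ : (Fin 4 → ℂ) ≃ₗ[ℂ] (Fin 4 → ℂ)) :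
    (∀ u v : Fin 4 → ℂ, φ (mulT402 u v) = mulT402 (φ u) (φ v)) ↔
      ∃ x y z u v h g : ℂ, x ≠ 0 ∧ y ≠ 0 ∧
        φ ![1, 0, 0, 0] = ![x, z, u, h] ∧
        φ ![0, 1, 0, 0] = ![0, y, v, g] ∧
        φ ![0, 0, 1, 0] = ![0, 0, x * y, x * v] ∧
        φ ![0, 0, 0, 1] = ![0, 0, 0, x ^ 2 * y] := by
  constructor
  · intro hφ
    set a := φ ![1,0,0,0] with ha
    set b := φ ![0,1,0,0] with hb
    have h3 : φ ![0,0,1,0] = mulT402 a b := by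
      have := hφ ![1,0,0,0] ![0,1,0,0]
      rwa [show mulT402 ![(1:ℂ),0,0,0] ![0,1,0,0] = ![0,0,1,0] from by
        funext i; fin_cases i <;> simp [mulT402]] at this
    have h4 : φ ![0,0,0,1] = mulT402 a (mulT402 a b) := by
      have := hφ ![1,0,0,0] ![0,0,1,0]
      rwa [show mulT402 ![(1:ℂ),0,0,0] ![0,0,1,0] = ![0,0,0,1] from by
        funext i; fin_cases i <;> simp [mulT402], h3] at this
    have h23 : mulT402 b (mulT402 a b) = 0 := by
      have := hφ ![0,1,0,0] ![0,0,1,0]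
      rw [show mulT402 ![(0:ℂ),1,0,0] ![0,0,1,0] = 0 from by
        funext i; fin_cases i <;> simp [mulT402], h3, map_zero] at this
      exact this.symm
    have hne3 : φ ![0,0,1,0] ≠ 0 := by
      intro hc
      have := φ.map_eq_zero_iff.mp hc
      have := congrFun this 2
      simp at this
    have hne4 : φ ![0,0,0,1] ≠ 0 := by
      intro hc
      have := φ.map_eq_zero_iff.mp hc
      have := congrFun this 3
      simp at this
    have hb0 : b 0 = 0 := by
      by_contra hb0
      have hc3 : a 0 * b 1 - a 1 * b 0 = 0 := by
        have := congrFun h23 3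
        simp [mulT402] at this
        rcases this with h | h
        · exact absurd h hb0
        · exact h
      apply hne4
      rw [h4]
      funext i; fin_cases i <;> simp [mulT402, hc3]
    have hx : a 0 ≠ 0 := by
      intro hx
      apply hne3
      rw [h3]
      funext i; fin_cases i <;> simp [mulT402, hx, hb0]
    have hy : b 1 ≠ 0 := by
      intro hy
      apply hne4
      rw [h4]
      funext i; fin_cases i <;> simp [mulT402, hy, hb0]
    refine ⟨a 0, b 1, a 1, a 2, b 2, a 3, b 3, hx, hy, ?_, ?_, ?_, ?_⟩
    · funext i; fin_cases i <;> simp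
    · funext i; fin_cases i <;> simp [hb0]
    · rw [h3]; funext i; fin_cases i <;> simp [mulT402, hb0]
    · rw [h4]; funext i; fin_cases i <;> simp [mulT402, hb0] <;> ring
  · rintro ⟨x, y, z, u', v', h', g', hx, hy, h1, h2, h3, h4⟩
    intro p q
    rw [show mulT402 p q = (p 0 * q 1 - p 1 * q 0) • ![0,0,(1:ℂ),0] +
        (p 0 * q 2 - p 2 * q 0) • ![0,0,0,1] from by
      funext i; fin_cases i <;> simp [mulT402]]
    rw [map_add, map_smul, map_smul, h3, h4]
    conv_rhs => rw [decomp4 p, decomp4 q]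
    simp only [map_add, map_smul, h1, h2, h3, h4]
    funext i; fin_cases i <;> simp [mulT402] <;> ring
end

section
/- Let T be the 5-dimensional algebra over ℂ with basis e1,...,e5 and anticommutative multiplication determined by e1e2 = e3, e1e3 = e4, e2e4 = e5. Then every algebra automorphism of T has matrix of the form [[x,0,0,0,0],[0,y,0,0,0],[z,0,xy,0,0],[p,q,0,x²y,0],[r,h,-yp,0,x²y²]] with x,y ≠ 0, and every such invertible matrix defines an automorphism. -/
/-- The automorphisms of `T⁵₁₀` are exactly the invertible linear maps with
matrix `[[x,0,0,0,0],[0,y,0,0,0],[z,0,xy,0,0],[p,q,0,x²y,0],[r,h,-yp,0,x²y²]]`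
in the basis `e₁,…,e₅`. -/
theorem T510_automorphisms (φ : (Fin 5 → ℂ) ≃ₗ[ℂ] (Fin 5 → ℂ)) :
    (∀ u v : Fin 5 → ℂ, φ (mulT510 u v) = mulT510 (φ u) (φ v)) ↔
      ∃ x y z p q r h : ℂ, x ≠ 0 ∧ y ≠ 0 ∧
        φ ![1, 0, 0, 0, 0] = ![x, 0, z, p, r] ∧
        φ ![0, 1, 0, 0, 0] = ![0, y, 0, q, h] ∧
        φ ![0, 0, 1, 0, 0] = ![0, 0, x * y, 0, -(y * p)] ∧
        φ ![0, 0, 0, 1, 0] = ![0, 0, 0, x ^ 2 * y, 0] ∧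
        φ ![0, 0, 0, 0, 1] = ![0, 0, 0, 0, x ^ 2 * y ^ 2] := by
  constructor
  · intro hmul
    set A := φ ![1,0,0,0,0] with hA
    set B := φ ![0,1,0,0,0] with hB
    have m12 : mulT510 ![1,0,0,0,0] ![0,1,0,0,0] = ![(0:ℂ),0,1,0,0] := by
      funext i; fin_cases i <;> simp [mulT510]
    have hC : φ ![0,0,1,0,0] = mulT510 A B := by rw [← m12, hmul]
    have m13 : mulT510 ![1,0,0,0,0] ![0,0,1,0,0] = ![(0:ℂ),0,0,1,0] := by
      funext i; fin_cases i <;> simp [mulT510]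
    have hD : φ ![0,0,0,1,0] = mulT510 A (mulT510 A B) := by
      rw [← m13, hmul, hC]
    have m24 : mulT510 ![0,1,0,0,0] ![0,0,0,1,0] = ![(0:ℂ),0,0,0,1] := by
      funext i; fin_cases i <;> simp [mulT510]
    have hF : φ ![0,0,0,0,1] = mulT510 B (mulT510 A (mulT510 A B)) := by
      rw [← m24, hmul, hD]
    have m14 : mulT510 ![1,0,0,0,0] ![0,0,0,1,0] = (0 : Fin 5 → ℂ) := by
      funext i; fin_cases i <;> simp [mulT510]
    have hAD : mulT510 A (mulT510 A (mulT510 A B)) = 0 := by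
      rw [← hD, ← hmul, m14, map_zero]
    have m23 : mulT510 ![0,1,0,0,0] ![0,0,1,0,0] = (0 : Fin 5 → ℂ) := by
      funext i; fin_cases i <;> simp [mulT510]
    have hBC : mulT510 B (mulT510 A B) = 0 := by
      rw [← hC, ← hmul, m23, map_zero]
    -- the (5,5) entry is nonzero
    have hf4 : B 1 * (A 0 * (A 0 * B 1 - A 1 * B 0)) ≠ 0 := by
      intro h0
      have h5 : φ ![0,0,0,0,1] = 0 := by
        rw [hF]; funext i
        fin_cases i <;> simp [mulT510, -mul_eq_zero]
        linear_combination h0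
      have h6 : (![0,0,0,0,1] : Fin 5 → ℂ) = 0 :=
        φ.injective (h5.trans (map_zero φ).symm)
      simpa using congrFun h6 4
    have hy : B 1 ≠ 0 := fun h => hf4 (by rw [h]; ring)
    have hx : A 0 ≠ 0 := fun h => hf4 (by rw [h]; ring)
    have hc2 : A 0 * B 1 - A 1 * B 0 ≠ 0 := fun h => hf4 (by rw [h]; ring)
    have h4 := congrFun hAD 4
    have h3 := congrFun hBC 3
    have h4' := congrFun hBC 4
    simp [mulT510] at h4 h3 h4'
    have ha1 : A 1 = 0 := by
      rcases h4 with h | h | h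
      · exact h
      · exact absurd h hx
      · exact absurd h hc2
    have hb0 : B 0 = 0 := by
      rcases h3 with h | h
      · exact h
      · exact absurd h hc2
    have hb2 : B 2 = 0 := by
      rcases h4' with h | h
      · exact absurd h hy
      · rw [hb0, mul_zero, sub_zero] at h
        exact (mul_eq_zero.mp h).resolve_left hx
    refine ⟨A 0, B 1, A 2, A 3, B 3, A 4, B 4, hx, hy, ?_, ?_, ?_, ?_, ?_⟩
    · funext i; fin_cases i <;> simp [ha1]
    · funext i; fin_cases i <;> simp [hb0, hb2]
    · rw [hC]; funext i; fin_cases i <;>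
        simp [mulT510, ha1, hb0, hb2] <;> try ring
    · rw [hD]; funext i; fin_cases i <;>
        simp [mulT510, ha1, hb0, hb2] <;> try ring
    · rw [hF]; funext i; fin_cases i <;>
        simp [mulT510, ha1, hb0, hb2] <;> try ring
  · rintro ⟨x, y, z, p, q, r, h, hx, hy, h1, h2, h3, h4, h5⟩
    have hrep : ∀ u : Fin 5 → ℂ, u = u 0 • ![1,0,0,0,0] + u 1 • ![0,1,0,0,0]
        + u 2 • ![0,0,1,0,0] + u 3 • ![0,0,0,1,0] + u 4 • ![0,0,0,0,1] := by
      intro u; funext i; fin_cases i <;> simp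
    have hφ : ∀ u : Fin 5 → ℂ, φ u =
        ![x * u 0, y * u 1, z * u 0 + x*y * u 2,
          p * u 0 + q * u 1 + x^2*y * u 3,
          r * u 0 + h * u 1 - y*p * u 2 + x^2*y^2 * u 4] := by
      intro u
      conv_lhs => rw [hrep u]
      rw [map_add, map_add, map_add, map_add, map_smul, map_smul, map_smul,
        map_smul, map_smul, h1, h2, h3, h4, h5]
      funext i; fin_cases i <;> simp <;> ring
    intro u v
    rw [hφ u, hφ v, hφ (mulT510 u v)]
    funext i
    fin_cases i <;> simp [mulT510] <;> ring
end

section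
/- Let T be the 5-dimensional Tortkara algebra over ℂ with basis e1,...,e5 and nonzero products e1e2 = e3, e1e3 = e4, e2e4 = e5. Then the space of Tortkara 2-cocycles θ : T × T → ℂ modulo coboundaries is 3-dimensional, spanned by the classes of Δ14, Δ23, and Δ15 + Δ34 (where Δij is the skew-symmetric form with Δij(ei,ej) = 1). -/
/-- The skew form `Δᵢⱼ` on `ℂ⁵`. -/
def Delta5 (i j : Fin 5) (x y : Fin 5 → ℂ) : ℂ := x i * y j - x j * y i

noncomputable def Ee (i : Fin 5) : Fin 5 → ℂ := Pi.single i 1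

lemma expand (θ : (Fin 5 → ℂ) →ₗ[ℂ] (Fin 5 → ℂ) →ₗ[ℂ] ℂ) (x y : Fin 5 → ℂ) :
    θ x y = ∑ i : Fin 5, ∑ j : Fin 5, x i * y j * θ (Ee i) (Ee j) := by
  have hx : x = ∑ i : Fin 5, x i • Ee i := by
    funext k; simp [Ee, Pi.single_apply]
  have hy : y = ∑ j : Fin 5, y j • Ee j := by
    funext k; simp [Ee, Pi.single_apply]
  conv_lhs => rw [hx, hy]
  simp only [map_sum, map_smul, LinearMap.sum_apply, LinearMap.smul_apply, smul_eq_mul,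
    Finset.mul_sum]
  rw [Finset.sum_comm]
  exact Finset.sum_congr rfl fun i _ => Finset.sum_congr rfl fun j _ => by ring

set_option maxHeartbeats 4000000 in
/-- `H²_T(T⁵₁₀, ℂ)` is 3-dimensional, spanned by the classes of
`Δ₁₄`, `Δ₂₃` and `Δ₁₅ + Δ₃₄`: these are cocycles, every cocycle is a linear
combination of them plus a coboundary, and no nontrivial linear combination of
them is a coboundary. -/
theorem T510_second_cohomology :
    (IsTortkaraCocycle mulT510 (Delta5 0 3) ∧
     IsTortkaraCocycle mulT510 (Delta5 1 2) ∧
     IsTortkaraCocycle mulT510 (fun x y => Delta5 0 4 x y + Delta5 2 3 x y)) ∧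
    (∀ θ : (Fin 5 → ℂ) →ₗ[ℂ] (Fin 5 → ℂ) →ₗ[ℂ] ℂ,
      IsTortkaraCocycle mulT510 (fun x y => θ x y) →
      ∃ (c₁ c₂ c₃ : ℂ) (f : (Fin 5 → ℂ) →ₗ[ℂ] ℂ), ∀ x y : Fin 5 → ℂ,
        θ x y = c₁ * Delta5 0 3 x y + c₂ * Delta5 1 2 x y
          + c₃ * (Delta5 0 4 x y + Delta5 2 3 x y) + f (mulT510 x y)) ∧
    (∀ c₁ c₂ c₃ : ℂ,
      (∃ f : (Fin 5 → ℂ) →ₗ[ℂ] ℂ, ∀ x y : Fin 5 → ℂ,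
        c₁ * Delta5 0 3 x y + c₂ * Delta5 1 2 x y
          + c₃ * (Delta5 0 4 x y + Delta5 2 3 x y) = f (mulT510 x y)) →
      c₁ = 0 ∧ c₂ = 0 ∧ c₃ = 0) := by
  refine ⟨⟨⟨?_, ?_⟩, ⟨?_, ?_⟩, ⟨?_, ?_⟩⟩, ?_, ?_⟩
  · intro x y; simp [Delta5]; ring
  · intro x y z t; simp [Delta5, mulT510, Jac]; try ring
  · intro x y; simp [Delta5]; ring
  · intro x y z t; simp [Delta5, mulT510, Jac]; try ring
  · intro x y; simp [Delta5]; ring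
  · intro x y z t; simp [Delta5, mulT510, Jac]; try ring
  · -- every cocycle is a combination plus a coboundary
    intro θ hθ
    have s : ∀ i j : Fin 5, θ (Pi.single i 1) (Pi.single j 1)
        = -θ (Pi.single j 1) (Pi.single i 1) := fun i j => hθ.1 _ _
    have r1 := hθ.2 (Ee 0) (Ee 1) (Ee 2) (Ee 1)
    have r2 := hθ.2 (Ee 0) (Ee 1) (Ee 2) (Ee 2)
    have r3 := hθ.2 (Ee 0) (Ee 1) (Ee 2) (Ee 3)
    have r4 := hθ.2 (Ee 0) (Ee 1) (Ee 2) (Ee 0)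
    simp only at r1 r2 r3 r4
    repeat rw [expand θ] at r1
    repeat rw [expand θ] at r2
    repeat rw [expand θ] at r3
    repeat rw [expand θ] at r4
    simp [Fin.sum_univ_five, Ee, mulT510, Jac, Pi.single_apply] at r1
    simp [Fin.sum_univ_five, Ee, mulT510, Jac, Pi.single_apply] at r2
    simp [Fin.sum_univ_five, Ee, mulT510, Jac, Pi.single_apply] at r3
    simp [Fin.sum_univ_five, Ee, mulT510, Jac, Pi.single_apply] at r4
    -- r1 : 0 = T41 + T41 ; r2 : 0 = T42 ; r3 : 0 = T43 ; r4 : -T23 = T40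
    have h41 : θ (Pi.single 4 1) (Pi.single 1 1) = 0 := by linear_combination -r1/2
    have h14 : θ (Pi.single 1 1) (Pi.single 4 1) = 0 := by rw [s 1 4, h41, neg_zero]
    have h42 : θ (Pi.single 4 1) (Pi.single 2 1) = 0 := r2.symm
    have h24 : θ (Pi.single 2 1) (Pi.single 4 1) = 0 := by rw [s 2 4, h42, neg_zero]
    have h43 : θ (Pi.single 4 1) (Pi.single 3 1) = 0 := r3.symm
    have h34 : θ (Pi.single 3 1) (Pi.single 4 1) = 0 := by rw [s 3 4, h43, neg_zero]
    have h23 : θ (Pi.single 2 1) (Pi.single 3 1)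
        = θ (Pi.single 0 1) (Pi.single 4 1) := by
      linear_combination -(s 0 4) - r4
    have h32 : θ (Pi.single 3 1) (Pi.single 2 1)
        = -θ (Pi.single 0 1) (Pi.single 4 1) := by rw [s 3 2, h23]
    have hii : ∀ i : Fin 5, θ (Pi.single i 1) (Pi.single i 1) = 0 := by
      intro i; linear_combination (s i i)/2
    refine ⟨θ (Ee 0) (Ee 3), θ (Ee 1) (Ee 2), θ (Ee 0) (Ee 4),
      θ (Ee 0) (Ee 1) • LinearMap.proj 2 + θ (Ee 0) (Ee 2) • LinearMap.proj 3
        + θ (Ee 1) (Ee 3) • LinearMap.proj 4, ?_⟩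
    intro x y
    rw [expand θ x y]
    simp only [Fin.sum_univ_five, Ee, Delta5, mulT510, Pi.single_apply,
      LinearMap.add_apply, LinearMap.smul_apply, LinearMap.proj_apply, smul_eq_mul,
      Matrix.cons_val_zero, Matrix.cons_val_one, Matrix.head_cons,
      Matrix.cons_val_two, Matrix.tail_cons, Matrix.cons_val_three, Matrix.cons_val_four]
    simp only [s 1 0, s 2 0, s 3 0, s 4 0, s 2 1, s 3 1, h41, h32, h42, h43,
      h14, h24, h34, h23, hii]
    ring
  · -- no nontrivial combination is a coboundary
    intro c₁ c₂ c₃ ⟨f, hf⟩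
    have hz : ∀ x y : Fin 5 → ℂ, mulT510 x y = ![0, 0, x 0 * y 1 - x 1 * y 0,
        x 0 * y 2 - x 2 * y 0, x 1 * y 3 - x 3 * y 1] := fun _ _ => rfl
    have h1 := hf (Ee 0) (Ee 3)
    have h2 := hf (Ee 1) (Ee 2)
    have h3 := hf (Ee 0) (Ee 4)
    have m1 : mulT510 (Ee 0) (Ee 3) = 0 := by
      funext k; fin_cases k <;> simp [mulT510, Ee, Pi.single_apply]
    have m2 : mulT510 (Ee 1) (Ee 2) = 0 := by
      funext k; fin_cases k <;> simp [mulT510, Ee, Pi.single_apply]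
    have m3 : mulT510 (Ee 0) (Ee 4) = 0 := by
      funext k; fin_cases k <;> simp [mulT510, Ee, Pi.single_apply]
    rw [m1, map_zero] at h1
    rw [m2, map_zero] at h2
    rw [m3, map_zero] at h3
    simp [Delta5, Ee, Pi.single_apply] at h1 h2 h3
    exact ⟨h1, h2, h3⟩
end

section
/- Let T be the 4-dimensional Tortkara algebra over ℂ with basis e1,e2,e3,e4 and nonzero products e1e2 = e3, e1e3 = e4. Then the quotient of the space of Tortkara 2-cocycles θ : T × T → ℂ by coboundaries is 3-dimensional, spanned by the classes of Δ14, Δ23, Δ24, where Δij is the skew-symmetric form with Δij(ei,ej) = 1 and zero on other basis pairs. -/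
/-- The skew form `Δᵢⱼ` on `ℂ⁴`. -/
def Delta4 (i j : Fin 4) (x y : Fin 4 → ℂ) : ℂ := x i * y j - x j * y i

/-- Basis vectors of `ℂ⁴`. -/
def eT (i : Fin 4) : Fin 4 → ℂ := Pi.single i 1

lemma bil_expand (θ : (Fin 4 → ℂ) →ₗ[ℂ] (Fin 4 → ℂ) →ₗ[ℂ] ℂ) (x y : Fin 4 → ℂ) :
    θ x y = ∑ i : Fin 4, ∑ j : Fin 4, x i * y j * θ (eT i) (eT j) := by
  have hx : x = ∑ i : Fin 4, x i • eT i := by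
    ext j; simp [eT, Pi.single_apply]
  have hy : y = ∑ i : Fin 4, y i • eT i := by
    ext j; simp [eT, Pi.single_apply]
  conv_lhs => rw [hx, hy]
  simp [map_sum, LinearMap.sum_apply, map_smul, smul_eq_mul, Finset.mul_sum]
  rw [Finset.sum_comm]
  exact Finset.sum_congr rfl fun i _ => Finset.sum_congr rfl fun j _ => by ring

/-- `H²_T(T⁴₀₂, ℂ)` is 3-dimensional, spanned by the classes of
`Δ₁₄`, `Δ₂₃` and `Δ₂₄`: these are cocycles, every cocycle is a linear
combination of them plus a coboundary, and no nontrivial linear combination of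
them is a coboundary. -/
theorem T402_second_cohomology :
    (IsTortkaraCocycle mulT402 (Delta4 0 3) ∧
     IsTortkaraCocycle mulT402 (Delta4 1 2) ∧
     IsTortkaraCocycle mulT402 (Delta4 1 3)) ∧
    (∀ θ : (Fin 4 → ℂ) →ₗ[ℂ] (Fin 4 → ℂ) →ₗ[ℂ] ℂ,
      IsTortkaraCocycle mulT402 (fun x y => θ x y) →
      ∃ (c₁ c₂ c₃ : ℂ) (f : (Fin 4 → ℂ) →ₗ[ℂ] ℂ), ∀ x y : Fin 4 → ℂ,
        θ x y = c₁ * Delta4 0 3 x y + c₂ * Delta4 1 2 x y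
          + c₃ * Delta4 1 3 x y + f (mulT402 x y)) ∧
    (∀ c₁ c₂ c₃ : ℂ,
      (∃ f : (Fin 4 → ℂ) →ₗ[ℂ] ℂ, ∀ x y : Fin 4 → ℂ,
        c₁ * Delta4 0 3 x y + c₂ * Delta4 1 2 x y + c₃ * Delta4 1 3 x y
          = f (mulT402 x y)) →
      c₁ = 0 ∧ c₂ = 0 ∧ c₃ = 0) := by
  refine ⟨⟨?_, ?_, ?_⟩, ?_, ?_⟩
  · constructor
    · intro x y; simp [Delta4]; ring
    · intro x y z t; simp [Delta4, mulT402, Jac, Pi.add_apply]; try ring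
  · constructor
    · intro x y; simp [Delta4]; ring
    · intro x y z t; simp [Delta4, mulT402, Jac, Pi.add_apply]; try ring
  · constructor
    · intro x y; simp [Delta4]; ring
    · intro x y z t; simp [Delta4, mulT402, Jac, Pi.add_apply]; try ring
  · intro θ hc
    obtain ⟨hs, hcc⟩ := hc
    simp only [] at hs hcc
    have hdiag : ∀ v, θ v v = 0 := fun v => by
      have h := hs v v; linear_combination h / 2
    have h34 : θ (eT 2) (eT 3) = 0 := by
      have key := hcc (eT 1) (eT 0) (eT 0) (eT 2)
      have e1 : mulT402 (eT 1) (eT 0) = -eT 2 := by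
        ext j; fin_cases j <;> simp [mulT402, eT, Pi.single_apply]
      have e2 : mulT402 (eT 0) (eT 2) = eT 3 := by
        ext j; fin_cases j <;> simp [mulT402, eT, Pi.single_apply]
      have e3 : mulT402 (eT 1) (eT 2) = 0 := by
        ext j; fin_cases j <;> simp [mulT402, eT, Pi.single_apply]
      have e4 : mulT402 (eT 0) (eT 0) = 0 := by
        ext j; fin_cases j <;> simp [mulT402, eT, Pi.single_apply]
      have e5 : Jac mulT402 (eT 1) (eT 0) (eT 0) = 0 := by
        ext j; fin_cases j <;> simp [Jac, mulT402, eT, Pi.single_apply, Pi.add_apply]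
      have e6 : Jac mulT402 (eT 1) (eT 2) (eT 0) = 0 := by
        ext j; fin_cases j <;> simp [Jac, mulT402, eT, Pi.single_apply, Pi.add_apply]
      rw [e1, e2, e3, e4, e5, e6] at key
      simpa using key
    refine ⟨θ (eT 0) (eT 3), θ (eT 1) (eT 2), θ (eT 1) (eT 3),
      θ (eT 0) (eT 1) • LinearMap.proj 2 + θ (eT 0) (eT 2) • LinearMap.proj 3, fun x y => ?_⟩
    rw [bil_expand θ x y]
    simp only [Fin.sum_univ_four]
    rw [hs (eT 1) (eT 0), hs (eT 2) (eT 0), hs (eT 2) (eT 1), hs (eT 3) (eT 0),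
      hs (eT 3) (eT 1), hs (eT 3) (eT 2), hdiag (eT 0), hdiag (eT 1), hdiag (eT 2),
      hdiag (eT 3), h34]
    simp [Delta4, mulT402, LinearMap.proj_apply, smul_eq_mul]
    ring
  · rintro c₁ c₂ c₃ ⟨f, hf⟩
    have m1 : mulT402 (eT 0) (eT 3) = 0 := by
      ext j; fin_cases j <;> simp [mulT402, eT, Pi.single_apply]
    have m2 : mulT402 (eT 1) (eT 2) = 0 := by
      ext j; fin_cases j <;> simp [mulT402, eT, Pi.single_apply]
    have m3 : mulT402 (eT 1) (eT 3) = 0 := by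
      ext j; fin_cases j <;> simp [mulT402, eT, Pi.single_apply]
    have h1 := hf (eT 0) (eT 3)
    have h2 := hf (eT 1) (eT 2)
    have h3 := hf (eT 1) (eT 3)
    rw [m1] at h1; rw [m2] at h2; rw [m3] at h3
    simp [Delta4, eT, Pi.single_apply] at h1 h2 h3
    exact ⟨h1, h2, h3⟩
end
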